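/- arXiv:1906.08158 — 2 statements merged into one kernel-verified Lean document; each statement's English description precedes it below -/
import Mathlib

section
/- For discrete random variables y₁, …, y_b and ω, if the y_i are mutually conditionally independent given ω, then the mutual information between the joint (y₁, …, y_b) and ω is bounded above by the sum of individual mutual informations: I(y₁, …, y_b ; ω) ≤ Σᵢ I(yᵢ ; ω). -/
open scoped BigOperators Classical

/-- Probability that the discrete random variable `X` takes value `a`,
under weight function `p` on a finite sample space. -/
noncomputable def pr {Ω α : Type*} [Fintype Ω] (p : Ω → ℝ) (X : Ω → α) (a : α) : ℝ :=
  ∑ s : Ω, if X s = a then p s else 0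

/-- Shannon entropy of a discrete random variable. -/
noncomputable def ent {Ω α : Type*} [Fintype Ω] [Fintype α] (p : Ω → ℝ) (X : Ω → α) : ℝ :=
  ∑ a : α, Real.negMulLog (pr p X a)

/-- Conditional Shannon entropy `H(X | Y) = ∑_b P(Y=b) H(X | Y=b)`. -/
noncomputable def condEnt {Ω α β : Type*} [Fintype Ω] [Fintype α] [Fintype β]
    (p : Ω → ℝ) (X : Ω → α) (Y : Ω → β) : ℝ :=
  ∑ b : β, ∑ a : α,
    pr p Y b * Real.negMulLog (pr p (fun s => (X s, Y s)) (a, b) / pr p Y b)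

/-- Mutual information `I(X ; Y) = H(X) − H(X | Y)`. -/
noncomputable def mi {Ω α β : Type*} [Fintype Ω] [Fintype α] [Fintype β]
    (p : Ω → ℝ) (X : Ω → α) (Y : Ω → β) : ℝ :=
  ent p X - condEnt p X Y

/-- Conditional mutual information `I(X ; Y | Z) = H(X | Z) − H(X | Z, Y)`. -/
noncomputable def cmi {Ω α β γ : Type*} [Fintype Ω] [Fintype α] [Fintype β] [Fintype γ]
    (p : Ω → ℝ) (X : Ω → α) (Y : Ω → β) (Z : Ω → γ) : ℝ :=
  condEnt p X Z - condEnt p X (fun s => (Z s, Y s))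

/-- The joint random variable of a family of random variables. -/
def jointFam {Ω ι α : Type*} (y : ι → Ω → α) : Ω → (ι → α) := fun s i => y i s

/-- The joint random variable of the sub-family indexed by a finite set `A`. -/
def jointSet {Ω ι α : Type*} (y : ι → Ω → α) (A : Finset ι) : Ω → (A → α) :=
  fun s i => y i.1 s

/-- The family `y` is mutually conditionally independent given `w`:
the conditional joint distribution factorizes. -/
def CondIndepFam {Ω ι α γ : Type*} [Fintype Ω] [Fintype ι] (p : Ω → ℝ)
    (y : ι → Ω → α) (w : Ω → γ) : Prop :=
  ∀ c : γ, 0 < pr p w c → ∀ a : ι → α,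
    pr p (fun s => (jointFam y s, w s)) (a, c) / pr p w c
      = ∏ i : ι, pr p (fun s => (y i s, w s)) (a i, c) / pr p w c



open Finset Real

lemma pr_nonneg {Ω α : Type*} [Fintype Ω] (p : Ω → ℝ) (hp : ∀ s, 0 ≤ p s) (X : Ω → α) (a : α) :
    0 ≤ pr p X a := by
  apply Finset.sum_nonneg; intro s _; split
  · exact hp s
  · exact le_refl 0

lemma pr_expect {Ω α : Type*} [Fintype Ω] [Fintype α] (p : Ω → ℝ) (X : Ω → α) (g : α → ℝ) :
    ∑ a, pr p X a * g a = ∑ s, p s * g (X s) := by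
  unfold pr
  simp only [Finset.sum_mul, ite_mul, zero_mul]
  rw [Finset.sum_comm]
  simp

lemma sum_pr {Ω α : Type*} [Fintype Ω] [Fintype α] (p : Ω → ℝ) (X : Ω → α) :
    ∑ a, pr p X a = ∑ s, p s := by
  have := pr_expect p X (fun _ => 1)
  simpa using this

lemma pr_fst {Ω α β : Type*} [Fintype Ω] [Fintype α] (p : Ω → ℝ) (X : Ω → α) (Y : Ω → β) (c : β) :
    ∑ a, pr p (fun s => (X s, Y s)) (a, c) = pr p Y c := by
  unfold pr
  rw [Finset.sum_comm]
  congr 1; ext s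
  simp [Prod.ext_iff, ite_and]

lemma gibbs {ι : Type*} [Fintype ι] (P Q : ι → ℝ) (hP : ∀ a, 0 ≤ P a) (hQ : ∀ a, 0 ≤ Q a)
    (hPs : ∑ a, P a = 1) (hQs : ∑ a, Q a = 1) (habs : ∀ a, Q a = 0 → P a = 0) :
    ∑ a, Real.negMulLog (P a) ≤ -∑ a, P a * Real.log (Q a) := by
  have key : ∀ a, P a - Q a ≤ P a * Real.log (P a) - P a * Real.log (Q a) := by
    intro a
    rcases eq_or_lt_of_le (hP a) with h | h
    · rw [← h]; simp; linarith [hQ a]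
    · have hQa : 0 < Q a := lt_of_le_of_ne (hQ a) fun h0 => by
        have := habs a h0.symm; linarith
      have h1 : Real.log (Q a / P a) ≤ Q a / P a - 1 :=
        Real.log_le_sub_one_of_pos (by positivity)
      rw [Real.log_div (ne_of_gt hQa) (ne_of_gt h)] at h1
      have h2 := mul_le_mul_of_nonneg_left h1 (le_of_lt h)
      have h3 : P a * (Q a / P a - 1) = Q a - P a := by field_simp
      rw [h3, mul_sub] at h2
      linarith
  have hsum := Finset.sum_le_sum (fun a (_ : a ∈ Finset.univ) => key a)
  rw [Finset.sum_sub_distrib, Finset.sum_sub_distrib, hPs, hQs] at hsum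
  simp only [Real.negMulLog, neg_mul, Finset.sum_neg_distrib]
  linarith

lemma prod_entropy {α : Type*} [Fintype α] :
    ∀ (n : ℕ) (f : Fin n → α → ℝ), (∀ i x, 0 ≤ f i x) → (∀ i, ∑ x, f i x = 1) →
    ∑ a : Fin n → α, Real.negMulLog (∏ i, f i (a i)) = ∑ i, ∑ x, Real.negMulLog (f i x) := by
  intro n
  induction n with
  | zero => intro f _ _; simp [Real.negMulLog]
  | succ n ih =>
    intro f hf hf1
    rw [← Equiv.sum_comp (Fin.consEquiv (fun _ => α))]
    rw [Fintype.sum_prod_type]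
    have hstep : ∀ (x : α) (a : Fin n → α),
        (∏ i, f i ((Fin.consEquiv (fun _ => α)) (x, a) i))
          = f 0 x * ∏ i : Fin n, f i.succ (a i) := by
      intro x a
      rw [Fin.prod_univ_succ]
      simp [Fin.consEquiv]
    have hsum1 : ∑ a : Fin n → α, ∏ i : Fin n, f i.succ (a i) = 1 := by
      rw [← Fintype.prod_sum]
      simp [hf1]
    have ihv := ih (fun i => f i.succ) (fun i x => hf _ x) (fun i => hf1 _)
    calc ∑ x : α, ∑ a : Fin n → α, Real.negMulLog (∏ i, f i ((Fin.consEquiv (fun _ => α)) (x, a) i))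
        = ∑ x : α, ∑ a : Fin n → α,
            ((∏ i : Fin n, f i.succ (a i)) * Real.negMulLog (f 0 x)
              + f 0 x * Real.negMulLog (∏ i : Fin n, f i.succ (a i))) := by
          congr 1; ext x; congr 1; ext a
          rw [hstep, Real.negMulLog_mul]
      _ = ∑ x : α, (Real.negMulLog (f 0 x)
              + f 0 x * ∑ a : Fin n → α, Real.negMulLog (∏ i : Fin n, f i.succ (a i))) := by
          congr 1; ext x
          rw [Finset.sum_add_distrib, ← Finset.sum_mul, hsum1, one_mul, ← Finset.mul_sum]
      _ = ∑ i, ∑ x, Real.negMulLog (f i x) := by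
          rw [Finset.sum_add_distrib, ← Finset.sum_mul, hf1 0, one_mul, ihv,
            Fin.sum_univ_succ]

lemma pr_le_pr_self {Ω α : Type*} [Fintype Ω] (p : Ω → ℝ) (hp : ∀ s, 0 ≤ p s)
    (X : Ω → α) (s : Ω) : p s ≤ pr p X (X s) := by
  unfold pr
  have : p s = if X s = X s then p s else 0 := by simp
  rw [this]
  apply Finset.single_le_sum (f := fun t => if X t = X s then p t else 0)
  · intro t _; split
    · exact hp t
    · exact le_refl 0
  · exact Finset.mem_univ s

lemma pr_joint_le {Ω α : Type*} [Fintype Ω] {b : ℕ} (p : Ω → ℝ) (hp : ∀ s, 0 ≤ p s)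
    (y : Fin b → Ω → α) (a : Fin b → α) (i : Fin b) :
    pr p (jointFam y) a ≤ pr p (y i) (a i) := by
  apply Finset.sum_le_sum
  intro s _; split
  · rename_i h
    rw [show y i s = a i from congrFun h i, if_pos rfl]
  · split
    · exact hp s
    · exact le_refl 0

lemma ent_subadd {Ω α : Type*} [Fintype Ω] [Fintype α] {b : ℕ}
    (p : Ω → ℝ) (hp : ∀ s, 0 ≤ p s) (hsum : ∑ s, p s = 1) (y : Fin b → Ω → α) :
    ent p (jointFam y) ≤ ∑ i, ent p (y i) := by
  set P : (Fin b → α) → ℝ := fun a => pr p (jointFam y) a with hPdef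
  set Q : (Fin b → α) → ℝ := fun a => ∏ i, pr p (y i) (a i) with hQdef
  have hPn : ∀ a, 0 ≤ P a := fun a => pr_nonneg p hp _ a
  have hQn : ∀ a, 0 ≤ Q a := fun a =>
    Finset.prod_nonneg fun i _ => pr_nonneg p hp _ _
  have hPs : ∑ a, P a = 1 := by rw [hPdef]; rw [sum_pr, hsum]
  have hQs : ∑ a, Q a = 1 := by
    rw [hQdef, ← Fintype.prod_sum]
    simp [sum_pr, hsum]
  have habs : ∀ a, Q a = 0 → P a = 0 := by
    intro a hQ0
    obtain ⟨i, _, hi⟩ := Finset.prod_eq_zero_iff.mp hQ0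
    have h1 := pr_joint_le p hp y a i
    have h2 := hPn a
    rw [hi] at h1
    exact le_antisymm h1 h2
  have hg := gibbs P Q hPn hQn hPs hQs habs
  have hQcalc : ∑ a, P a * Real.log (Q a) = ∑ i, ∑ x, pr p (y i) x * Real.log (pr p (y i) x) := by
    rw [hPdef]
    rw [pr_expect p (jointFam y) (fun a => Real.log (Q a))]
    have : ∀ s, p s * Real.log (Q (jointFam y s))
        = ∑ i, p s * Real.log (pr p (y i) (y i s)) := by
      intro s
      rcases eq_or_lt_of_le (hp s) with h | h
      · simp [← h]
      · rw [hQdef]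
        dsimp only
        rw [Real.log_prod]
        · rw [Finset.mul_sum]
          rfl
        · intro i _
          have := pr_le_pr_self p hp (y i) s
          unfold jointFam
          intro h0; rw [h0] at this; linarith
    rw [Finset.sum_congr rfl (fun s _ => this s), Finset.sum_comm]
    congr 1; ext i
    exact (pr_expect p (y i) (fun x => Real.log (pr p (y i) x))).symm
  unfold ent
  rw [hQcalc] at hg
  calc ∑ a, Real.negMulLog (pr p (jointFam y) a) ≤ _ := hg
    _ = ∑ i, ∑ x, Real.negMulLog (pr p (y i) x) := by
        rw [← Finset.sum_neg_distrib]
        congr 1; ext i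
        rw [← Finset.sum_neg_distrib]
        congr 1; ext x
        simp [Real.negMulLog]

lemma condEnt_fact {Ω α γ : Type*} [Fintype Ω] [Fintype α] [Fintype γ] {b : ℕ}
    (p : Ω → ℝ) (hp : ∀ s, 0 ≤ p s) (y : Fin b → Ω → α) (w : Ω → γ)
    (hind : CondIndepFam p y w) :
    condEnt p (jointFam y) w = ∑ i, condEnt p (y i) w := by
  unfold condEnt
  conv_rhs => rw [Finset.sum_comm]
  apply Finset.sum_congr rfl
  intro c _
  rcases eq_or_lt_of_le (pr_nonneg p hp w c) with hc | hc
  · simp [← hc]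
  · have hqn : ∀ (i : Fin b) (x : α),
        0 ≤ pr p (fun s => (y i s, w s)) (x, c) / pr p w c :=
      fun i x => div_nonneg (pr_nonneg p hp _ _) (le_of_lt hc)
    have hq1 : ∀ i : Fin b,
        ∑ x, pr p (fun s => (y i s, w s)) (x, c) / pr p w c = 1 := by
      intro i
      rw [← Finset.sum_div, pr_fst, div_self (ne_of_gt hc)]
    calc ∑ a : Fin b → α,
          pr p w c * Real.negMulLog (pr p (fun s => (jointFam y s, w s)) (a, c) / pr p w c)
        = ∑ a : Fin b → α, pr p w c * Real.negMulLog
            (∏ i, pr p (fun s => (y i s, w s)) (a i, c) / pr p w c) := by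
          apply Finset.sum_congr rfl
          intro a _
          rw [hind c hc a]
      _ = pr p w c * ∑ a : Fin b → α, Real.negMulLog
            (∏ i, (fun (i : Fin b) (x : α) => pr p (fun s => (y i s, w s)) (x, c) / pr p w c) i (a i)) :=
          (Finset.mul_sum _ _ _).symm
      _ = pr p w c * ∑ i, ∑ x, Real.negMulLog
            (pr p (fun s => (y i s, w s)) (x, c) / pr p w c) := by
          rw [prod_entropy b _ hqn hq1]
      _ = ∑ i, ∑ x, pr p w c * Real.negMulLog
            (pr p (fun s => (y i s, w s)) (x, c) / pr p w c) := by
          rw [Finset.mul_sum]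
          apply Finset.sum_congr rfl
          intro i _
          rw [Finset.mul_sum]


/-- if the `yᵢ` are mutually conditionally independent given `ω`,
then `I(y₁, …, y_b ; ω) ≤ ∑ᵢ I(yᵢ ; ω)`  (BALD upper-bounds BatchBALD). -/
theorem stmt_1 {Ω α γ : Type*} [Fintype Ω] [Fintype α] [Fintype γ] {b : ℕ}
    (p : Ω → ℝ) (hp : ∀ s, 0 ≤ p s) (hsum : ∑ s, p s = 1)
    (y : Fin b → Ω → α) (w : Ω → γ)
    (hind : CondIndepFam p y w) :
    mi p (jointFam y) w ≤ ∑ i : Fin b, mi p (y i) w := by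
  unfold mi
  rw [Finset.sum_sub_distrib, condEnt_fact p hp y w hind]
  have := ent_subadd p hp hsum y
  linarith
end

section
/- Nemhauser–Wolsey–Fisher guarantee: let f be a nonnegative, monotone, submodular set function on subsets of a finite ground set Ω with f(∅) = 0, and let A_b be the set produced by the greedy algorithm that, for b steps, adds the element maximizing the marginal gain. Then f(A_b) ≥ (1 − (1 − 1/b)^b) · max_{|S| ≤ b} f(S) ≥ (1 − 1/e) · max_{|S| ≤ b} f(S). -/
open scoped BigOperators Classical

/-- Nemhauser–Wolsey–Fisher guarantee for the greedy algorithm on a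
nonnegative monotone submodular function:
`f(A_b) ≥ (1 − (1 − 1/b)^b)·max_{|S| ≤ b} f S ≥ (1 − 1/e)·max_{|S| ≤ b} f S`. -/
theorem stmt_9 {Ω : Type*} [Fintype Ω] [DecidableEq Ω]
    (f : Finset Ω → ℝ) (h0 : f ∅ = 0) (hnn : ∀ A, 0 ≤ f A)
    (hmono : ∀ A B : Finset Ω, A ⊆ B → f A ≤ f B)
    (hsub : ∀ (A : Finset Ω) (x y : Ω), x ≠ y → x ∉ A → y ∉ A →
      f (insert x A) + f (insert y A) ≥ f (insert y (insert x A)) + f A)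
    (b : ℕ) (hb : 0 < b)
    (A : ℕ → Finset Ω) (hA0 : A 0 = ∅)
    (hgreedy : ∀ n < b, ∃ x ∉ A n, A (n + 1) = insert x (A n) ∧
      ∀ z ∉ A n, f (insert z (A n)) ≤ f (insert x (A n)))
    (S : Finset Ω) (hS : S.card ≤ b) :
    (1 - (1 - 1 / (b : ℝ)) ^ b) * f S ≤ f (A b) ∧
    (1 - 1 / Real.exp 1) * f S ≤ (1 - (1 - 1 / (b : ℝ)) ^ b) * f S := by
    classical
  -- diminishing returns over a disjoint added set
  have dimD : ∀ (D B : Finset Ω), Disjoint B D → ∀ x ∉ B ∪ D,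
      f (insert x (B ∪ D)) + f B ≤ f (insert x B) + f (B ∪ D) := by
    intro D
    induction D using Finset.induction_on with
    | empty => intro B _ x _; simp
    | @insert y D' hyD' ih =>
      intro B hdisj x hx
      have hyB : y ∉ B := fun h =>
        Finset.disjoint_right.mp hdisj (Finset.mem_insert_self y D') h
      have hdisj' : Disjoint B D' :=
        hdisj.mono_right (Finset.subset_insert _ _)
      have hx' : x ∉ B ∪ D' := by
        intro h; apply hx
        rcases Finset.mem_union.mp h with h | h
        · exact Finset.mem_union_left _ h
        · exact Finset.mem_union_right _ (Finset.mem_insert_of_mem h)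
      have hxy : x ≠ y := by
        intro h; subst h
        exact hx (Finset.mem_union_right _ (Finset.mem_insert_self _ _))
      have hy' : y ∉ B ∪ D' := by
        intro h; rcases Finset.mem_union.mp h with h | h
        · exact hyB h
        · exact hyD' h
      have hsb := hsub (B ∪ D') x y hxy hx' hy'
      have hih := ih B hdisj' x hx'
      rw [Finset.union_insert, Finset.insert_comm]
      linarith
  have dim : ∀ (B C : Finset Ω), B ⊆ C → ∀ x : Ω,
      f (insert x C) + f B ≤ f (insert x B) + f C := by
    intro B C hBC x
    by_cases hxC : x ∈ C
    · rw [Finset.insert_eq_self.mpr hxC]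
      have := hmono B (insert x B) (Finset.subset_insert _ _)
      linarith
    · have hD := dimD (C \ B) B Finset.disjoint_sdiff
      rw [Finset.union_sdiff_of_subset hBC] at hD
      exact hD x hxC
  -- telescoping bound
  have tel : ∀ (T B : Finset Ω),
      f (B ∪ T) ≤ f B + ∑ x ∈ T, (f (insert x B) - f B) := by
    intro T
    induction T using Finset.induction_on with
    | empty => intro B; simp
    | @insert y T' hyT' ih =>
      intro B
      rw [Finset.sum_insert hyT', Finset.union_insert]
      have h1 := dim B (B ∪ T') Finset.subset_union_left y
      have h2 := ih B
      linarith
  have hbR : (0:ℝ) < b := by exact_mod_cast hb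
  have hone : 1 / (b:ℝ) ≤ 1 := by
    rw [div_le_one hbR]; exact_mod_cast hb
  have hfactor : 0 ≤ 1 - 1 / (b:ℝ) := by linarith
  -- the key per-step inequality
  have step : ∀ n < b, f S - f (A n) ≤ (b:ℝ) * (f (A (n+1)) - f (A n)) := by
    intro n hn
    obtain ⟨x, hxA, hA1, hmax⟩ := hgreedy n hn
    have h1 : f S ≤ f (A n ∪ S) := hmono _ _ Finset.subset_union_right
    have h2 := tel S (A n)
    have hgain : 0 ≤ f (insert x (A n)) - f (A n) := by
      have := hmono (A n) (insert x (A n)) (Finset.subset_insert _ _)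
      linarith
    have hterm : ∀ z ∈ S, f (insert z (A n)) - f (A n)
        ≤ f (insert x (A n)) - f (A n) := by
      intro z _
      by_cases hz : z ∈ A n
      · rw [Finset.insert_eq_self.mpr hz]; linarith
      · have := hmax z hz; linarith
    have h3 : ∑ z ∈ S, (f (insert z (A n)) - f (A n))
        ≤ (S.card : ℝ) * (f (insert x (A n)) - f (A n)) := by
      calc ∑ z ∈ S, (f (insert z (A n)) - f (A n))
          ≤ ∑ _z ∈ S, (f (insert x (A n)) - f (A n)) := Finset.sum_le_sum hterm
        _ = (S.card : ℝ) * (f (insert x (A n)) - f (A n)) := by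
            rw [Finset.sum_const, nsmul_eq_mul]
    have h4 : (S.card : ℝ) ≤ (b : ℝ) := by exact_mod_cast hS
    have h5 : (S.card : ℝ) * (f (insert x (A n)) - f (A n))
        ≤ (b:ℝ) * (f (insert x (A n)) - f (A n)) :=
      mul_le_mul_of_nonneg_right h4 hgain
    rw [hA1]
    linarith
  have key : ∀ n ≤ b, f S - f (A n) ≤ (1 - 1 / (b:ℝ)) ^ n * f S := by
    intro n
    induction n with
    | zero => intro _; simp [hA0, h0]
    | succ n ih =>
      intro hn1
      have hn : n < b := hn1
      have ihn := ih (le_of_lt hn)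
      have hs := step n hn
      have hmain : f S - f (A (n+1)) ≤ (1 - 1/(b:ℝ)) * (f S - f (A n)) := by
        have h : (f S - f (A n)) / (b:ℝ) ≤ f (A (n+1)) - f (A n) :=
          (div_le_iff₀ hbR).mpr (by linarith)
        have expand : (1 - 1/(b:ℝ)) * (f S - f (A n))
            = (f S - f (A n)) - (f S - f (A n)) / (b:ℝ) := by ring
        linarith
      calc f S - f (A (n+1)) ≤ (1 - 1/(b:ℝ)) * (f S - f (A n)) := hmain
        _ ≤ (1 - 1/(b:ℝ)) * ((1 - 1/(b:ℝ))^n * f S) :=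
            mul_le_mul_of_nonneg_left ihn hfactor
        _ = (1 - 1/(b:ℝ))^(n+1) * f S := by ring
  constructor
  · have := key b le_rfl
    linarith
  · have h1 : 1 - 1/(b:ℝ) ≤ Real.exp (-(1/(b:ℝ))) := by
      have := Real.add_one_le_exp (-(1/(b:ℝ)))
      linarith
    have h2 : (1 - 1/(b:ℝ))^b ≤ Real.exp (-(1/(b:ℝ)))^b :=
      pow_le_pow_left₀ hfactor h1 b
    have h3 : Real.exp (-(1/(b:ℝ)))^b = Real.exp (-1) := by
      rw [← Real.exp_nat_mul]
      congr 1
      field_simp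
    have h4 : Real.exp (-1 : ℝ) = 1 / Real.exp 1 := by
      rw [Real.exp_neg]; exact (one_div _).symm
    have h5 : (1 - 1/(b:ℝ))^b ≤ 1 / Real.exp 1 := by
      rw [← h4]; rw [h3] at h2; exact h2
    exact mul_le_mul_of_nonneg_right (by linarith) (hnn S)
end
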